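/- Let G be a finite group with a normal cyclic subgroup A such that G/A is Hamiltonian and the commutator subgroup G' is not contained in A. Let D = Z(C_G(A)). Suppose that the Zassenhaus Conjecture holds for every proper quotient of G. If u is a torsion element of V(ℤG) and g ∈ G \ D, then ε_g(u) ≥ 0. -/

import Mathlib

open scoped Classical Pointwise

noncomputable section

namespace ZCPaper

variable {G : Type*} [Group G]

/-- The augmentation of an element of the integral group ring `ℤG`. -/
def aug (u : MonoidAlgebra ℤ G) : ℤ := Finsupp.sum u.coeff fun _ a => a

/-- The canonical inclusion `ℤG → ℚG`. -/
def toQ : MonoidAlgebra ℤ G →+* MonoidAlgebra ℚ G :=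
  MonoidAlgebra.liftNCRingHom (MonoidAlgebra.singleOneRingHom.comp (Int.castRingHom ℚ))
    (MonoidAlgebra.of ℚ G) (fun r g => by
      show Commute (MonoidAlgebra.single 1 ((r : ℚ))) (MonoidAlgebra.single g 1)
      unfold Commute SemiconjBy
      rw [MonoidAlgebra.single_mul_single, MonoidAlgebra.single_mul_single,
        one_mul, mul_one, one_mul, mul_one])

/-- `u ∈ ℤG` is rationally conjugate to the group element `g`, i.e. `v⁻¹ u v = g`
for some unit `v` of `ℚG`. -/
def RatConj (u : MonoidAlgebra ℤ G) (g : G) : Prop :=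
  ∃ v : (MonoidAlgebra ℚ G)ˣ,
    (↑v⁻¹ : MonoidAlgebra ℚ G) * toQ u * ↑v = MonoidAlgebra.of ℚ G g

/-- The partial augmentation `ε_g(u)`: the sum of the coefficients of `u`
over the conjugacy class of `g`. -/
def pa (u : MonoidAlgebra ℤ G) (g : G) : ℤ :=
  Finsupp.sum u.coeff fun x a => if IsConj g x then a else 0

/-- The Zassenhaus Conjecture holds for `H`: every torsion unit of `ℤH` of
augmentation `1` is rationally conjugate to a group element. -/
def ZC (H : Type*) [Group H] : Prop :=
  ∀ u : (MonoidAlgebra ℤ H)ˣ, IsOfFinOrder u → aug (u : MonoidAlgebra ℤ H) = 1 →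
    ∃ h : H, RatConj (u : MonoidAlgebra ℤ H) h

/-- The Zassenhaus Conjecture holds for every proper quotient of `H`. -/
def ZCProperQuotients (H : Type*) [Group H] : Prop :=
  ∀ (M : Subgroup H) [M.Normal], M ≠ ⊥ → ZC (H ⧸ M)

/-- `ω_D(u) = 1`: the sum of the coefficients of `u` over each coset `gD`
is `1` for the trivial coset and `0` otherwise.  (For `D` normal this says
exactly that the image of `u` in `ℤ(G/D)` is `1`.) -/
def mapsToOne (D : Subgroup G) (u : MonoidAlgebra ℤ G) : Prop :=
  ∀ g : G, (Finsupp.sum u.coeff fun x a => if g⁻¹ * x ∈ D then a else 0) =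
    if g ∈ D then 1 else 0

/-- A group is Hamiltonian if it is non-abelian and all its subgroups are normal. -/
def IsHamiltonian (H : Type*) [Group H] : Prop :=
  (¬ ∀ a b : H, a * b = b * a) ∧ ∀ K : Subgroup H, K.Normal

/-! ### Auxiliary lemmas -/

section RingAux

variable {H : Type*} [Group H]

/-- The partial augmentation over `ℚ`. -/
def paQ (u : MonoidAlgebra ℚ H) (g : H) : ℚ :=
  Finsupp.sum u.coeff fun x a => if IsConj g x then a else 0

lemma paQ_zero (g : H) : paQ (0 : MonoidAlgebra ℚ H) g = 0 :=
  Finsupp.sum_zero_index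

lemma paQ_add (u v : MonoidAlgebra ℚ H) (g : H) :
    paQ (u + v) g = paQ u g + paQ v g := by
  refine Finsupp.sum_add_index ?_ ?_
  · intro a _; simp
  · intro a _ b₁ b₂; split <;> simp

lemma paQ_single (x : H) (a : ℚ) (g : H) :
    paQ (MonoidAlgebra.single x a) g = if IsConj g x then a else 0 := by
  unfold paQ
  exact Finsupp.sum_single_index (by simp)

lemma paQ_single_mul_single (x y : H) (a b : ℚ) (g : H) :
    paQ (MonoidAlgebra.single x a * MonoidAlgebra.single y b) g
      = paQ (MonoidAlgebra.single y b * MonoidAlgebra.single x a) g := by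
  rw [MonoidAlgebra.single_mul_single, MonoidAlgebra.single_mul_single,
    paQ_single, paQ_single]
  have h1 : IsConj (x * y) (y * x) := isConj_iff.2 ⟨y, by group⟩
  have hc : IsConj g (x * y) ↔ IsConj g (y * x) :=
    ⟨fun h => h.trans h1, fun h => h.trans h1.symm⟩
  rw [mul_comm a b]
  exact if_congr hc rfl rfl

lemma paQ_single_mul (x : H) (a : ℚ) (v : MonoidAlgebra ℚ H) (g : H) :
    paQ (MonoidAlgebra.single x a * v) g = paQ (v * MonoidAlgebra.single x a) g := by
  induction v using MonoidAlgebra.induction with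
  | zero => rw [mul_zero, zero_mul]
  | single_add y b f hy hb ih =>
      rw [mul_add, add_mul, paQ_add, paQ_add, ih, paQ_single_mul_single]

lemma paQ_mul_comm (u v : MonoidAlgebra ℚ H) (g : H) :
    paQ (u * v) g = paQ (v * u) g := by
  induction u using MonoidAlgebra.induction with
  | zero => rw [mul_zero, zero_mul]
  | single_add x a f hx hb ih =>
      rw [add_mul, mul_add, paQ_add, paQ_add, ih, paQ_single_mul]

lemma paQ_unit_conj (v : (MonoidAlgebra ℚ H)ˣ) (w : MonoidAlgebra ℚ H) (g : H) :
    paQ ((↑v⁻¹ : MonoidAlgebra ℚ H) * w * (↑v : MonoidAlgebra ℚ H)) g = paQ w g := by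
  rw [paQ_mul_comm, ← mul_assoc, Units.mul_inv, one_mul]

lemma toQ_single (x : H) (a : ℤ) :
    toQ (MonoidAlgebra.single x a) = MonoidAlgebra.single x (a : ℚ) := by
  have h2 : toQ (MonoidAlgebra.single x a)
      = (MonoidAlgebra.singleOneRingHom.comp (Int.castRingHom ℚ)) a
        * MonoidAlgebra.of ℚ H x :=
    MonoidAlgebra.liftNC_single
      (((MonoidAlgebra.singleOneRingHom.comp (Int.castRingHom ℚ)) :
          ℤ →+* MonoidAlgebra ℚ H) : ℤ →+ MonoidAlgebra ℚ H)
      (⇑(MonoidAlgebra.of ℚ H)) x a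
  rw [h2]
  show MonoidAlgebra.single 1 ((a : ℚ)) * MonoidAlgebra.single x 1 = _
  rw [MonoidAlgebra.single_mul_single, one_mul, mul_one]

lemma pa_zero (g : H) : pa (0 : MonoidAlgebra ℤ H) g = 0 :=
  Finsupp.sum_zero_index

lemma pa_add (u v : MonoidAlgebra ℤ H) (g : H) :
    pa (u + v) g = pa u g + pa v g := by
  refine Finsupp.sum_add_index ?_ ?_
  · intro a _; simp
  · intro a _ b₁ b₂; split <;> simp

lemma pa_single (x : H) (a : ℤ) (g : H) :
    pa (MonoidAlgebra.single x a) g = if IsConj g x then a else 0 := by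
  unfold pa
  exact Finsupp.sum_single_index (by simp)

lemma paQ_toQ (u : MonoidAlgebra ℤ H) (g : H) :
    paQ (toQ u) g = ((pa u g : ℤ) : ℚ) := by
  induction u using MonoidAlgebra.induction with
  | zero => rw [map_zero, paQ_zero, pa_zero, Int.cast_zero]
  | single_add x a f hx hb ih =>
      rw [map_add, paQ_add, toQ_single, paQ_single, ih, pa_add, pa_single]
      split <;> push_cast <;> ring

lemma pa_mapDomain {K : Type*} [Group K] (f : H →* K) (u : MonoidAlgebra ℤ H)
    {g : H} (hcls : ∀ x : H, IsConj (f g) (f x) ↔ IsConj g x) :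
    pa (MonoidAlgebra.mapDomain f u) (f g) = pa u g := by
  unfold pa
  rw [show (MonoidAlgebra.mapDomain f u).coeff = Finsupp.mapDomain f u.coeff from rfl]
  rw [Finsupp.sum_mapDomain_index (by intro b; simp)
    (by intro b m₁ m₂; split <;> simp)]
  refine Finsupp.sum_congr ?_
  intro x _
  exact if_congr (hcls x) rfl rfl

lemma aug_mapDomain {K : Type*} [Group K] (f : H → K) (u : MonoidAlgebra ℤ H) :
    aug (MonoidAlgebra.mapDomain f u) = aug u := by
  unfold aug
  exact Finsupp.sum_mapDomain_index (fun _ => rfl) (fun _ _ _ => rfl)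

end RingAux

section GroupAux

lemma conj_zpow' (x a : G) (n : ℤ) : x * a ^ n * x⁻¹ = (x * a * x⁻¹) ^ n := by
  have := map_zpow (MulAut.conj x) a n
  simpa [MulAut.conj_apply] using this.symm

lemma conj_zpow₂ (x a : G) (n : ℤ) : x⁻¹ * a ^ n * x = (x⁻¹ * a * x) ^ n := by
  simpa using conj_zpow' x⁻¹ a n

lemma coe_gen_eq {A : Subgroup G} (a0 : ↥A) {b : G} (hb : b ∈ A) {s : ℤ}
    (h : a0 ^ s = (⟨b, hb⟩ : ↥A)) : ((a0 : G)) ^ s = b := by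
  have := congrArg (fun y : ↥A => (y : G)) h
  simpa using this

lemma A_comm (A : Subgroup G) (hA : IsCyclic ↥A) {a b : G}
    (ha : a ∈ A) (hb : b ∈ A) : Commute a b := by
  obtain ⟨a0, ha0⟩ := hA.exists_generator
  obtain ⟨s, hs⟩ := ha0 ⟨a, ha⟩
  obtain ⟨r, hr⟩ := ha0 ⟨b, hb⟩
  rw [← coe_gen_eq a0 ha hs, ← coe_gen_eq a0 hb hr]
  exact (Commute.refl ((a0 : G))).zpow_zpow s r

lemma zpowers_normal_of_mem_cyclic (A : Subgroup G) [A.Normal] (hA : IsCyclic ↥A)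
    {z : G} (hz : z ∈ A) : (Subgroup.zpowers z).Normal := by
  obtain ⟨a0, ha0⟩ := hA.exists_generator
  obtain ⟨s, hs⟩ := ha0 ⟨z, hz⟩
  have hsG : ((a0 : G)) ^ s = z := coe_gen_eq a0 hz hs
  constructor
  intro n hn x
  obtain ⟨k, hk⟩ := Subgroup.mem_zpowers_iff.mp hn
  have hconjA : x * (a0 : G) * x⁻¹ ∈ A := ‹A.Normal›.conj_mem _ a0.2 x
  obtain ⟨t, ht⟩ := ha0 ⟨x * (a0 : G) * x⁻¹, hconjA⟩
  have htG : ((a0 : G)) ^ t = x * (a0 : G) * x⁻¹ := coe_gen_eq a0 hconjA ht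
  refine Subgroup.mem_zpowers_iff.mpr ⟨t * k, ?_⟩
  have e1 : x * z * x⁻¹ = z ^ t := by
    rw [← hsG, conj_zpow', ← htG, ← zpow_mul, ← zpow_mul, mul_comm]
  rw [← hk, conj_zpow' x z k, e1, ← zpow_mul]

lemma case_one (A : Subgroup G) [A.Normal] (hA : IsCyclic ↥A) {g : G}
    (hgC : g ∉ Subgroup.centralizer (A : Set G)) :
    ∃ z : G, z ≠ 1 ∧ z ∈ A ∧ (∀ k : ℤ, IsConj g (g * z ^ k)) := by
  obtain ⟨a0, ha0⟩ := hA.exists_generator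
  set a : G := (a0 : G) with hadef
  have haA : a ∈ A := a0.2
  have h1 : g⁻¹ * a * g ∈ A := by
    simpa using ‹A.Normal›.conj_mem a haA g⁻¹
  obtain ⟨t, ht⟩ := ha0 ⟨g⁻¹ * a * g, h1⟩
  have htG : a ^ t = g⁻¹ * a * g := coe_gen_eq a0 h1 ht
  have key : ∀ m : ℤ, g⁻¹ * a ^ m * g = a ^ (t * m) := by
    intro m
    rw [conj_zpow₂, ← htG, ← zpow_mul, mul_comm]
  refine ⟨a ^ (1 - t), ?_, A.zpow_mem haA _, ?_⟩
  · intro h0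
    apply hgC
    have h4 : a = a ^ t := by
      have h5 : a ^ ((1 : ℤ) - t) = 1 := h0
      have h6 : a ^ (1 : ℤ) * (a ^ t)⁻¹ = 1 := by
        rw [← zpow_sub]
        exact h5
      rw [zpow_one] at h6
      exact (mul_inv_eq_one.mp h6)
    have hcomm : Commute g a := by
      have h7 : g * a = a * g := by
        have : g * (g⁻¹ * a * g) = g * a ^ t := by rw [← htG]
        rw [← h4] at this
        group at this
        rw [← this]
      exact h7
    refine Subgroup.mem_centralizer_iff.mpr ?_
    intro b hb
    obtain ⟨s, hsb⟩ := ha0 ⟨b, hb⟩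
    rw [← coe_gen_eq a0 hb hsb]
    exact ((hcomm.zpow_right s).symm).eq
  · intro k
    rw [isConj_iff]
    refine ⟨a ^ (-k), ?_⟩
    have e1 : (a ^ (-k))⁻¹ = a ^ k := by rw [← zpow_neg, neg_neg]
    rw [e1]
    have e2 : a ^ (-k) * g * a ^ k = g * (g⁻¹ * a ^ (-k) * g) * a ^ k := by group
    rw [e2, key (-k), mul_assoc, ← zpow_add]
    have e3 : t * -k + k = (1 - t) * k := by ring
    rw [e3, zpow_mul]

lemma normal_of_le_quot (A : Subgroup G) [A.Normal]
    (hHam : ∀ K : Subgroup (G ⧸ A), K.Normal) (H : Subgroup G) (hAH : A ≤ H) :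
    H.Normal := by
  have h1 : H = Subgroup.comap (QuotientGroup.mk' A)
      (Subgroup.map (QuotientGroup.mk' A) H) := by
    rw [Subgroup.comap_map_eq, QuotientGroup.ker_mk', sup_eq_left.mpr hAH]
  rw [h1]
  exact (hHam _).comap _

lemma comm_elim {a u b v : G} (hQ : Commute a (b * v)) (hbu : Commute b u) :
    (a * u)⁻¹ * (b * v)⁻¹ * (a * u) * (b * v) = u⁻¹ * v⁻¹ * u * v := by
  have e1 : a⁻¹ * (b * v)⁻¹ * a = (b * v)⁻¹ := by
    rw [mul_assoc, ← hQ.inv_right.eq]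
    group
  have e2 : b⁻¹ * u * b = u := by
    have h := hbu.eq
    calc b⁻¹ * u * b = b⁻¹ * (u * b) := by group
      _ = b⁻¹ * (b * u) := by rw [← h]
      _ = u := by group
  calc (a * u)⁻¹ * (b * v)⁻¹ * (a * u) * (b * v)
      = u⁻¹ * (a⁻¹ * (b * v)⁻¹ * a) * u * (b * v) := by group
    _ = u⁻¹ * (b * v)⁻¹ * u * (b * v) := by rw [e1]
    _ = u⁻¹ * (v⁻¹ * (b⁻¹ * u * b) * v) := by group
    _ = u⁻¹ * (v⁻¹ * u * v) := by rw [e2]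
    _ = u⁻¹ * v⁻¹ * u * v := by group

lemma conj_zpow_zpow {g c z : G} (h : c⁻¹ * g * c = g * z)
    (hgz : Commute g z) (hcz : Commute c z) (p q : ℤ) :
    (c ^ q)⁻¹ * g ^ p * c ^ q = g ^ p * z ^ (p * q) := by
  have step1 : ∀ (x y w : G), x⁻¹ * y * x = y * w → Commute y w →
      ∀ m : ℤ, x⁻¹ * y ^ m * x = y ^ m * w ^ m := by
    intro x y w hxy hyw m
    calc x⁻¹ * y ^ m * x = (x⁻¹ * y * x) ^ m := conj_zpow₂ x y m
      _ = (y * w) ^ m := by rw [hxy]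
      _ = y ^ m * w ^ m := hyw.mul_zpow m
  have hz' : z = g⁻¹ * (c⁻¹ * g * c) := by rw [h]; group
  have h2 : g⁻¹ * c * g = c * z⁻¹ := by rw [hz']; group
  have E := step1 g c z⁻¹ h2 hcz.inv_right q
  have h4 : (c ^ q)⁻¹ * g * c ^ q = g * z ^ q := by
    have h5 : (c ^ q)⁻¹ * g * c ^ q = g * ((z⁻¹) ^ q)⁻¹ := by
      calc (c ^ q)⁻¹ * g * c ^ q
          = (c ^ q)⁻¹ * g * (c ^ q * (z⁻¹) ^ q) * ((z⁻¹) ^ q)⁻¹ := by group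
        _ = (c ^ q)⁻¹ * g * (g⁻¹ * c ^ q * g) * ((z⁻¹) ^ q)⁻¹ := by rw [E]
        _ = g * ((z⁻¹) ^ q)⁻¹ := by group
    rw [h5, inv_zpow, inv_inv]
  have F := step1 (c ^ q) g (z ^ q) h4 (hgz.zpow_right q) p
  rw [F, ← zpow_mul, mul_comm q p]

lemma case_two (A : Subgroup G) [A.Normal] (hA : IsCyclic ↥A)
    (hHam : ∀ K : Subgroup (G ⧸ A), K.Normal) {g c : G}
    (hg : g ∈ Subgroup.centralizer (A : Set G))
    (hc : c ∈ Subgroup.centralizer (A : Set G))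
    (hnc : c * g ≠ g * c) :
    ∃ z : G, z ≠ 1 ∧ (Subgroup.zpowers z).Normal ∧
      (∀ k : ℤ, IsConj g (g * z ^ k)) := by
  set K := A ⊔ Subgroup.zpowers g with hK
  set L := A ⊔ Subgroup.zpowers c with hL
  have hKn : K.Normal := normal_of_le_quot A hHam K le_sup_left
  have hLn : L.Normal := normal_of_le_quot A hHam L le_sup_left
  have hgK : g ∈ K := Subgroup.mem_sup_right (Subgroup.mem_zpowers g)
  have hcL : c ∈ L := Subgroup.mem_sup_right (Subgroup.mem_zpowers c)
  set z := g⁻¹ * c⁻¹ * g * c with hzdef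
  have hz1 : z ≠ 1 := by
    intro h0
    apply hnc
    calc c * g = c * g * z := by rw [h0, mul_one]
      _ = g * c := by rw [hzdef]; group
  have hzK : z ∈ K := by
    have h1 : c⁻¹ * g * c ∈ K := by
      simpa using hKn.conj_mem g hgK c⁻¹
    have h2 : z = g⁻¹ * (c⁻¹ * g * c) := by rw [hzdef]; group
    rw [h2]
    exact mul_mem (inv_mem hgK) h1
  have hzL : z ∈ L := by
    have h1 : g⁻¹ * c⁻¹ * g ∈ L := by
      simpa [mul_assoc] using hLn.conj_mem c⁻¹ (inv_mem hcL) g⁻¹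
    have h2 : z = (g⁻¹ * c⁻¹ * g) * c := by rw [hzdef]
    rw [h2]
    exact mul_mem h1 hcL
  -- elements of K commute with g, elements of L commute with c
  have hKg : ∀ w ∈ K, Commute g w := by
    have hle : K ≤ Subgroup.centralizer {g} := by
      rw [hK]
      refine sup_le ?_ ?_
      · intro a ha
        refine Subgroup.mem_centralizer_iff.mpr ?_
        intro h hh
        rw [Set.mem_singleton_iff] at hh
        rw [hh]
        exact (Subgroup.mem_centralizer_iff.mp hg a ha).symm
      · intro w hw
        obtain ⟨k, hk⟩ := Subgroup.mem_zpowers_iff.mp hw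
        refine Subgroup.mem_centralizer_iff.mpr ?_
        intro h hh
        rw [Set.mem_singleton_iff] at hh
        rw [hh, ← hk]
        exact ((Commute.refl g).zpow_right k).eq
    intro w hw
    have := Subgroup.mem_centralizer_iff.mp (hle hw) g
      (Set.mem_singleton_iff.mpr rfl)
    exact this
  have hLc : ∀ w ∈ L, Commute c w := by
    have hle : L ≤ Subgroup.centralizer {c} := by
      rw [hL]
      refine sup_le ?_ ?_
      · intro a ha
        refine Subgroup.mem_centralizer_iff.mpr ?_
        intro h hh
        rw [Set.mem_singleton_iff] at hh
        rw [hh]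
        exact (Subgroup.mem_centralizer_iff.mp hc a ha).symm
      · intro w hw
        obtain ⟨k, hk⟩ := Subgroup.mem_zpowers_iff.mp hw
        refine Subgroup.mem_centralizer_iff.mpr ?_
        intro h hh
        rw [Set.mem_singleton_iff] at hh
        rw [hh, ← hk]
        exact ((Commute.refl c).zpow_right k).eq
    intro w hw
    have := Subgroup.mem_centralizer_iff.mp (hle hw) c
      (Set.mem_singleton_iff.mpr rfl)
    exact this
  have hgz : Commute g z := hKg z hzK
  have hcz : Commute c z := hLc z hzL
  have hzC : z ∈ Subgroup.centralizer (A : Set G) := by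
    rw [hzdef]
    exact mul_mem (mul_mem (mul_mem (inv_mem hg) (inv_mem hc)) hg) hc
  have h0 : c⁻¹ * g * c = g * z := by rw [hzdef]; group
  have keyconj := conj_zpow_zpow h0 hgz hcz
  refine ⟨z, hz1, ?_, ?_⟩
  · constructor
    intro n hn x
    obtain ⟨k, hk⟩ := Subgroup.mem_zpowers_iff.mp hn
    have hg' : x * g * x⁻¹ ∈ K := hKn.conj_mem g hgK x
    have hc' : x * c * x⁻¹ ∈ L := hLn.conj_mem c hcL x
    have hKset : ((K : Set G)) = (A : Set G) * (Subgroup.zpowers g : Set G) :=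
      Subgroup.normal_mul A (Subgroup.zpowers g)
    have hLset : ((L : Set G)) = (A : Set G) * (Subgroup.zpowers c : Set G) :=
      Subgroup.normal_mul A (Subgroup.zpowers c)
    have hg'' : (x * g * x⁻¹) ∈ (A : Set G) * (Subgroup.zpowers g : Set G) := by
      rw [← hKset]; exact hg'
    have hc'' : (x * c * x⁻¹) ∈ (A : Set G) * (Subgroup.zpowers c : Set G) := by
      rw [← hLset]; exact hc'
    obtain ⟨a₁, ha₁, w₁, hw₁, hgw⟩ := Set.mem_mul.mp hg''
    obtain ⟨a₂, ha₂, w₂, hw₂, hcw⟩ := Set.mem_mul.mp hc''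
    obtain ⟨p, hp⟩ := Subgroup.mem_zpowers_iff.mp hw₁
    obtain ⟨q, hq⟩ := Subgroup.mem_zpowers_iff.mp hw₂
    rw [← hp] at hgw
    rw [← hq] at hcw
    -- commuting facts for a₁, a₂
    have hca₁g : Commute a₁ (g ^ p) := by
      have h9 : Commute a₁ g := Subgroup.mem_centralizer_iff.mp hg a₁ ha₁
      exact h9.zpow_right p
    have hca₂g : Commute a₂ (g ^ p) := by
      have h9 : Commute a₂ g := Subgroup.mem_centralizer_iff.mp hg a₂ ha₂
      exact h9.zpow_right p
    have hca₁c : Commute a₁ (c ^ q) := by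
      have h9 : Commute a₁ c := Subgroup.mem_centralizer_iff.mp hc a₁ ha₁
      exact h9.zpow_right q
    have hca₁₂ : Commute a₁ a₂ := A_comm A hA ha₁ ha₂
    have hQ : Commute a₁ (a₂ * c ^ q) := hca₁₂.mul_right hca₁c
    have e0 : x * z * x⁻¹
        = (x * g * x⁻¹)⁻¹ * (x * c * x⁻¹)⁻¹ * (x * g * x⁻¹) * (x * c * x⁻¹) := by
      rw [hzdef]; group
    have e3 : x * z * x⁻¹ = z ^ (p * q) := by
      rw [e0, ← hgw, ← hcw, comm_elim hQ hca₂g]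
      calc (g ^ p)⁻¹ * (c ^ q)⁻¹ * g ^ p * c ^ q
          = (g ^ p)⁻¹ * ((c ^ q)⁻¹ * g ^ p * c ^ q) := by group
        _ = (g ^ p)⁻¹ * (g ^ p * z ^ (p * q)) := by rw [keyconj p q]
        _ = z ^ (p * q) := by group
    refine Subgroup.mem_zpowers_iff.mpr ⟨p * q * k, ?_⟩
    rw [← hk, conj_zpow' x z k, e3, ← zpow_mul]
  · intro k
    rw [isConj_iff]
    refine ⟨(c ^ k)⁻¹, ?_⟩
    have := keyconj 1 k
    rw [zpow_one, one_mul] at this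
    rw [inv_inv]
    exact this

end GroupAux

/-- In a minimal cyclic-by-Hamiltonian counterexample setting,
partial augmentations outside `D = Z(C_G(A))` are non-negative. -/
theorem stmt17 {G : Type*} [Group G] [Fintype G]
    (A : Subgroup G) [A.Normal] (hA : IsCyclic ↥A)
    (hHam : IsHamiltonian (G ⧸ A))
    (hG' : ¬ commutator G ≤ A)
    (C D : Subgroup G)
    (hC : C = Subgroup.centralizer (A : Set G))
    (hD : D = C ⊓ Subgroup.centralizer (C : Set G))
    (hquot : ZCProperQuotients G)
    (u : (MonoidAlgebra ℤ G)ˣ) (hu : IsOfFinOrder u)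
    (haug : aug (u : MonoidAlgebra ℤ G) = 1)
    (g : G) (hg : g ∉ D) :
    0 ≤ pa (u : MonoidAlgebra ℤ G) g := by
  subst hD
  subst hC
  -- produce the normal subgroup ⟨z⟩
  obtain ⟨z, hz1, hznormal, hzconj⟩ :
      ∃ z : G, z ≠ 1 ∧ (Subgroup.zpowers z).Normal ∧
        (∀ k : ℤ, IsConj g (g * z ^ k)) := by
    by_cases hgC : g ∈ Subgroup.centralizer (A : Set G)
    · -- g centralizes A but is not central in C
      have hgnc : g ∉ Subgroup.centralizer
          ((Subgroup.centralizer (A : Set G) : Subgroup G) : Set G) := by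
        intro hmem
        exact hg (Subgroup.mem_inf.mpr ⟨hgC, hmem⟩)
      have hex : ¬ ∀ h ∈ ((Subgroup.centralizer (A : Set G) : Subgroup G) : Set G),
          h * g = g * h := by
        intro hall
        exact hgnc (Subgroup.mem_centralizer_iff.mpr hall)
      push_neg at hex
      obtain ⟨c, hcC, hnc⟩ := hex
      exact case_two A hA hHam.2 hgC hcC hnc
    · obtain ⟨z, hz1, hzA, hzconj⟩ := case_one A hA hgC
      exact ⟨z, hz1, zpowers_normal_of_mem_cyclic A hA hzA, hzconj⟩
  set M := Subgroup.zpowers z with hMdef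
  haveI hMn : M.Normal := hznormal
  have hMne : M ≠ ⊥ := by
    rw [hMdef, ne_eq, Subgroup.zpowers_eq_bot]
    exact hz1
  have hZCq : ZC (G ⧸ M) := hquot M hMne
  set f := QuotientGroup.mk' M with hfdef
  set π := MonoidAlgebra.mapDomainRingHom ℤ f with hπdef
  set ubar := Units.map (π.toMonoidHom) u with hubardef
  have hfin : IsOfFinOrder ubar := (Units.map π.toMonoidHom).isOfFinOrder hu
  have hcoe : (ubar : MonoidAlgebra ℤ (G ⧸ M))
      = MonoidAlgebra.mapDomain f (u : MonoidAlgebra ℤ G) := by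
    rw [hubardef, Units.coe_map]
    rfl
  have haug2 : aug (ubar : MonoidAlgebra ℤ (G ⧸ M)) = 1 := by
    rw [hcoe, aug_mapDomain]
    exact haug
  obtain ⟨h, v, hv⟩ := hZCq ubar hfin haug2
  have hcls : ∀ x : G, IsConj (f g) (f x) ↔ IsConj g x := by
    intro x
    constructor
    · intro hconj
      obtain ⟨d, hd⟩ := isConj_iff.mp hconj
      obtain ⟨y, rfl⟩ := QuotientGroup.mk'_surjective M d
      have hd' : ((QuotientGroup.mk (y * g * y⁻¹) : G ⧸ M)) = QuotientGroup.mk x := by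
        exact hd
      have hm : (y * g * y⁻¹)⁻¹ * x ∈ M := QuotientGroup.eq.mp hd'
      set m := (y * g * y⁻¹)⁻¹ * x with hmdef2
      have hx : x = y * (g * (y⁻¹ * m * y)) * y⁻¹ := by
        rw [hmdef2]; group
      have hm' : y⁻¹ * m * y ∈ M := by
        simpa [mul_assoc] using hMn.conj_mem m hm y⁻¹
      obtain ⟨k, hk⟩ := Subgroup.mem_zpowers_iff.mp hm'
      have h1 : IsConj g (g * (y⁻¹ * m * y)) := by
        rw [← hk]
        exact hzconj k
      have h2 : IsConj (g * (y⁻¹ * m * y)) x := isConj_iff.mpr ⟨y, hx.symm⟩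
      exact h1.trans h2
    · intro hconj
      exact f.map_isConj hconj
  have e1 : pa (u : MonoidAlgebra ℤ G) g = pa (ubar : MonoidAlgebra ℤ (G ⧸ M)) (f g) := by
    rw [hcoe, pa_mapDomain f _ hcls]
  have e2 : ((pa (ubar : MonoidAlgebra ℤ (G ⧸ M)) (f g) : ℤ) : ℚ)
      = paQ (toQ (ubar : MonoidAlgebra ℤ (G ⧸ M))) (f g) := (paQ_toQ _ _).symm
  have e3 : paQ (toQ (ubar : MonoidAlgebra ℤ (G ⧸ M))) (f g)
      = paQ (MonoidAlgebra.of ℚ (G ⧸ M) h) (f g) := by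
    rw [← hv, paQ_unit_conj]
  have hfinal : (0 : ℚ) ≤ ((pa (u : MonoidAlgebra ℤ G) g : ℤ) : ℚ) := by
    rw [e1, e2, e3, MonoidAlgebra.of_apply, paQ_single]
    split <;> norm_num
  exact_mod_cast hfinal

end ZCPaper
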